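/- If the sequence (A_m)_{m∈ℤ} admits an exponential dichotomy (i.e., the central projections P_n^3 vanish) and 4cD‖G‖ < 1, then there exists L > 0 such that for every ε > 0 and every (δ,B)-pseudotrajectory y = (y_n) with δ = Lε, there exists a unique genuine solution x = (x_n) of x_{n+1} = F_n(x_n) with ‖x − y‖_B ≤ ε. -/

import Mathlib

/-- A Banach sequence space over ℤ: a linear subspace of all real sequences indexed
by ℤ, equipped with a complete norm which is solid. -/
structure BanachSeqSpace where
  /-- membership in the subspace -/
  mem : (ℤ → ℝ) → Prop
  /-- the norm -/
  N : (ℤ → ℝ) → ℝ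
  zero_mem : mem 0
  add_mem : ∀ s t, mem s → mem t → mem (s + t)
  smul_mem : ∀ (a : ℝ) (s), mem s → mem (a • s)
  N_nonneg : ∀ s, 0 ≤ N s
  N_zero : N 0 = 0
  N_eq_zero : ∀ s, mem s → N s = 0 → s = 0
  N_add : ∀ s t, mem s → mem t → N (s + t) ≤ N s + N t
  N_smul : ∀ (a : ℝ) (s), mem s → N (a • s) = |a| * N s
  /-- solidity: if |s n| ≤ |t n| for all n and t belongs to the space,
  then so does s, with N s ≤ N t -/
  solid : ∀ s t, mem t → (∀ n : ℤ, |s n| ≤ |t n|) → mem s ∧ N s ≤ N t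
  /-- completeness: every Cauchy sequence in the space converges in the space -/
  complete : ∀ u : ℕ → (ℤ → ℝ), (∀ k, mem (u k)) →
    (∀ ε > (0 : ℝ), ∃ K : ℕ, ∀ j ≥ K, ∀ k ≥ K, N (u j - u k) ≤ ε) →
    ∃ v, mem v ∧ ∀ ε > (0 : ℝ), ∃ K : ℕ, ∀ k ≥ K, N (u k - v) ≤ ε

/-- An admissible Banach sequence space: additionally contains all singleton indicator
sequences with positive norm and is invariant under shifts, which act isometrically. -/
structure AdmissibleBSS extends BanachSeqSpace where
  indicator_mem : ∀ n : ℤ, mem (fun k => if k = n then (1 : ℝ) else 0)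
  indicator_pos : ∀ n : ℤ, 0 < N (fun k => if k = n then (1 : ℝ) else 0)
  shift_mem : ∀ (s : ℤ → ℝ) (m : ℤ), mem s → mem (fun n => s (n + m))
  shift_isometry : ∀ (s : ℤ → ℝ) (m : ℤ), mem s → N (fun n => s (n + m)) = N s
variable {X : Type*} [NormedAddCommGroup X] [NormedSpace ℝ X]

/-- The forward cocycle: `fcoc A n k = A (n+k-1) ∘ ⋯ ∘ A n`, so that
`fcoc A n k = 𝒜(n+k, n)`. -/
def fcoc (A : ℤ → X →L[ℝ] X) (n : ℤ) : ℕ → (X →L[ℝ] X)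
  | 0 => ContinuousLinearMap.id ℝ X
  | (k + 1) => (A (n + k)).comp (fcoc A n k)

/-- A partial exponential dichotomy for a sequence `(A_m)_{m ∈ ℤ}` of bounded linear
operators: projections `P¹, P², P³` summing to the identity and commuting with the
dynamics, with the dynamics invertible along the unstable direction (witnessed by the
backward cocycle `V m n = 𝒜(m,n)P_n²` for `m ≤ n`), and exponential bounds. -/
structure PartialDichotomy (A : ℤ → X →L[ℝ] X) where
  P1 : ℤ → X →L[ℝ] X
  P2 : ℤ → X →L[ℝ] X
  P3 : ℤ → X →L[ℝ] X
  D : ℝ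
  b : ℝ
  d : ℝ
  hD : 0 < D
  hb : 0 < b
  hd : 0 < d
  proj1 : ∀ n, (P1 n).comp (P1 n) = P1 n
  proj2 : ∀ n, (P2 n).comp (P2 n) = P2 n
  proj3 : ∀ n, (P3 n).comp (P3 n) = P3 n
  sum_eq : ∀ n (x : X), P1 n x + P2 n x + P3 n x = x
  comm1 : ∀ n, (A n).comp (P1 n) = (P1 (n + 1)).comp (A n)
  comm2 : ∀ n, (A n).comp (P2 n) = (P2 (n + 1)).comp (A n)
  comm3 : ∀ n, (A n).comp (P3 n) = (P3 (n + 1)).comp (A n)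
  /-- the backward cocycle along the unstable direction, `V m n = 𝒜(m,n)P_n²` for `m ≤ n` -/
  V : ℤ → ℤ → X →L[ℝ] X
  V_self : ∀ n, V n n = P2 n
  V_proj : ∀ m n, m ≤ n → (V m n).comp (P2 n) = V m n
  V_range : ∀ m n, m ≤ n → (P2 m).comp (V m n) = V m n
  /-- `𝒜(n,m) ∘ 𝒜(m,n)P_n² = P_n²`: `V m n` inverts the forward dynamics -/
  V_right_inv : ∀ m n, m ≤ n → (fcoc A m (n - m).toNat).comp (V m n) = P2 n
  /-- `𝒜(m,n) ∘ 𝒜(n,m)P_m² = P_m²` -/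
  V_left_inv : ∀ m n, m ≤ n → (V m n).comp ((fcoc A m (n - m).toNat).comp (P2 m)) = P2 m
  /-- `‖𝒜(m,n)P_n¹‖ ≤ D e^{-d(m-n)}` for `m ≥ n` -/
  bound1 : ∀ (n : ℤ) (k : ℕ), ‖(fcoc A n k).comp (P1 n)‖ ≤ D * Real.exp (-d * k)
  /-- `‖𝒜(m,n)P_n²‖ ≤ D e^{-b(n-m)}` for `m ≤ n` -/
  bound2 : ∀ m n, m ≤ n → ‖V m n‖ ≤ D * Real.exp (-b * (n - m))

/-- Membership in `X_B`: the sequence of norms belongs to `B`. -/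
def memXB (B : BanachSeqSpace) (x : ℤ → X) : Prop := B.mem (fun n => ‖x n‖)

/-- The norm on `X_B`. -/
def NXB (B : BanachSeqSpace) (x : ℤ → X) : ℝ := B.N (fun n => ‖x n‖)

/-- Membership in the stable-unstable subspace `X_B^{s,u}`. -/
def memXBsu (B : BanachSeqSpace) {A : ℤ → X →L[ℝ] X} (pd : PartialDichotomy A)
    (x : ℤ → X) : Prop :=
  memXB B x ∧ ∀ n : ℤ, x n = pd.P1 n (x n) + pd.P2 n (x n)

/-- The central component `x^c` of a sequence: `(x^c)_n = P_n³ x_n`. -/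
def centr {A : ℤ → X →L[ℝ] X} (pd : PartialDichotomy A) (x : ℤ → X) : ℤ → X :=
  fun n => pd.P3 n (x n)

/-- The stable-unstable component `x^{s,u}` of a sequence: `(x^{s,u})_n = x_n − P_n³ x_n`. -/
def stun {A : ℤ → X →L[ℝ] X} (pd : PartialDichotomy A) (x : ℤ → X) : ℤ → X :=
  fun n => x n - pd.P3 n (x n)

/-- The adapted norm `‖x‖'_B = max{‖x^c‖_B, ‖x^{s,u}‖_B}` on `X_B`. -/
def Nadapt (B : BanachSeqSpace) {A : ℤ → X →L[ℝ] X} (pd : PartialDichotomy A)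
    (x : ℤ → X) : ℝ :=
  max (NXB B (centr pd x)) (NXB B (stun pd x))


/-! With `P³ = 0` the operator `G` is a bounded inverse `𝔸` of the difference operator
`x ↦ (x_n - A_{n-1} x_{n-1})_n` on `X_B`. Writing a candidate solution as `x = y + w`, the
equation `x_{n+1} = F_n(x_n)` becomes the fixed-point equation `w = 𝔸(g w)` with
`(g w)_n = F_{n-1}(y_{n-1} + w_{n-1}) - A_{n-1} w_{n-1} - y_n`. Since `B` is solid and shift
invariant, `g` is `c`-Lipschitz on `X_B`, so `w ↦ 𝔸(g w)` is a `c‖𝔸‖`-contraction of the complete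
space `X_B`, and `c‖𝔸‖ < 1` because `D ≥ 1/2` as soon as `X ≠ 0`. Its fixed point is the unique
shadowing solution, at distance at most `‖𝔸‖ δ / (1 - c‖𝔸‖)` from `y`. -/

open Filter Topology

namespace BanachSeqSpace

variable (B : BanachSeqSpace) {s t : ℤ → ℝ}

lemma mem_neg (hs : B.mem s) : B.mem (-s) := by
  simpa using B.smul_mem (-1) s hs

lemma mem_sub (hs : B.mem s) (ht : B.mem t) : B.mem (s - t) := by
  simpa [sub_eq_add_neg] using B.add_mem _ _ hs (B.mem_neg ht)

lemma N_neg (hs : B.mem s) : B.N (-s) = B.N s := by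
  simpa using B.N_smul (-1) s hs

lemma N_sub_comm (hs : B.mem s) (ht : B.mem t) : B.N (s - t) = B.N (t - s) := by
  rw [← neg_sub, B.N_neg (B.mem_sub ht hs)]

lemma abs_N_sub_N_le (hs : B.mem s) (ht : B.mem t) : |B.N s - B.N t| ≤ B.N (s - t) := by
  have hst := B.N_add (s - t) t (B.mem_sub hs ht) ht
  have hts := B.N_add (t - s) s (B.mem_sub ht hs) hs
  rw [sub_add_cancel] at hst hts
  rw [abs_sub_le_iff, ← B.N_sub_comm ht hs] at *
  constructor <;> linarith

end BanachSeqSpace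

namespace AdmissibleBSS

variable (B : AdmissibleBSS)

lemma N_indicator_mul_abs_le {s : ℤ → ℝ} (hs : B.mem s) (n : ℤ) :
    B.N (fun k => if k = n then (1 : ℝ) else 0) * |s n| ≤ B.N s := by
  have hsolid := (B.solid (s n • fun k => if k = n then (1 : ℝ) else 0) s hs fun k => by
    by_cases h : k = n <;> simp [h]).2
  rwa [B.N_smul _ _ (B.indicator_mem n), mul_comm] at hsolid

lemma tendsto_apply_of_tendsto_N {s : ℕ → ℤ → ℝ} {σ : ℤ → ℝ} (hs : ∀ j, B.mem (s j))
    (hσ : B.mem σ) (h : Tendsto (fun j => B.N (s j - σ)) atTop (𝓝 0)) (n : ℤ) :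
    Tendsto (fun j => s j n) atTop (𝓝 (σ n)) := by
  rw [tendsto_iff_dist_tendsto_zero]
  refine squeeze_zero (fun _ => dist_nonneg) (fun j => ?_)
    (by simpa using h.div_const (B.N fun k => if k = n then (1 : ℝ) else 0))
  rw [Real.dist_eq, le_div_iff₀ (B.indicator_pos n), mul_comm]
  exact B.N_indicator_mul_abs_le (B.mem_sub (hs j) hσ) n

lemma mem_and_tendsto_N_of_cauchy {s : ℕ → ℤ → ℝ} {σ : ℤ → ℝ} (hs : ∀ j, B.mem (s j))
    (hcauchy : ∀ ε > (0 : ℝ), ∃ K : ℕ, ∀ j ≥ K, ∀ j' ≥ K, B.N (s j - s j') ≤ ε)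
    (hσ : ∀ n, Tendsto (fun j => s j n) atTop (𝓝 (σ n))) :
    B.mem σ ∧ Tendsto (fun j => B.N (s j)) atTop (𝓝 (B.N σ)) := by
  obtain ⟨τ, hτ, hlim⟩ := B.complete s hs hcauchy
  have hlim' : Tendsto (fun j => B.N (s j - τ)) atTop (𝓝 0) := by
    refine Metric.tendsto_atTop.2 fun ε hε => ?_
    obtain ⟨K, hK⟩ := hlim (ε / 2) (half_pos hε)
    refine ⟨K, fun k hk => ?_⟩
    rw [Real.dist_0_eq_abs, abs_of_nonneg (B.N_nonneg _)]
    linarith [hK k hk]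
  obtain rfl : τ = σ := funext fun n =>
    tendsto_nhds_unique (B.tendsto_apply_of_tendsto_N hs hτ hlim' n) (hσ n)
  refine ⟨hτ, tendsto_iff_dist_tendsto_zero.2 ?_⟩
  refine squeeze_zero (fun _ => dist_nonneg) (fun j => ?_) hlim'
  rw [Real.dist_eq]
  exact B.abs_N_sub_N_le (hs j) hτ

end AdmissibleBSS

section SequenceSpace

variable {E : Type*} [NormedAddCommGroup E] (B : BanachSeqSpace) {x y : ℤ → E}

lemma memXB_of_norm_le {t : ℤ → ℝ} (ht : B.mem t) (h : ∀ n, ‖x n‖ ≤ t n) : memXB B x :=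
  (B.solid _ t ht fun n => by simpa using (h n).trans (le_abs_self _)).1

lemma NXB_le_of_norm_le {t : ℤ → ℝ} (ht : B.mem t) (h : ∀ n, ‖x n‖ ≤ t n) :
    NXB B x ≤ B.N t :=
  (B.solid _ t ht fun n => by simpa using (h n).trans (le_abs_self _)).2

lemma memXB_zero : memXB B (0 : ℤ → E) :=
  memXB_of_norm_le B B.zero_mem fun _ => by simp

lemma NXB_zero : NXB B (0 : ℤ → E) = 0 :=
  le_antisymm ((NXB_le_of_norm_le B B.zero_mem fun _ => by simp).trans_eq B.N_zero)
    (B.N_nonneg _)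

lemma memXB_sub (hx : memXB B x) (hy : memXB B y) : memXB B (x - y) :=
  memXB_of_norm_le B (B.add_mem _ _ hx hy) fun n => norm_sub_le (x n) (y n)

lemma NXB_add_le (hx : memXB B x) (hy : memXB B y) : NXB B (x + y) ≤ NXB B x + NXB B y :=
  (NXB_le_of_norm_le B (B.add_mem _ _ hx hy) fun n => norm_add_le (x n) (y n)).trans
    (B.N_add _ _ hx hy)

lemma NXB_sub_comm (x y : ℤ → E) : NXB B (x - y) = NXB B (y - x) := by
  simp only [NXB, Pi.sub_apply, norm_sub_rev]

lemma eq_of_NXB_sub_eq_zero (hx : memXB B x) (hy : memXB B y) (h : NXB B (x - y) = 0) :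
    x = y := funext fun n =>
  sub_eq_zero.1 <| norm_eq_zero.1 <| congrFun (B.N_eq_zero _ (memXB_sub B hx hy) h) n

lemma memXB_and_NXB_le_of_norm_le_shift (B : AdmissibleBSS) {w : ℤ → E} {c : ℝ}
    (hw : memXB B.toBanachSeqSpace w) (hc : 0 ≤ c) (h : ∀ n, ‖x n‖ ≤ c * ‖w (n - 1)‖) :
    memXB B.toBanachSeqSpace x ∧ NXB B.toBanachSeqSpace x ≤ c * NXB B.toBanachSeqSpace w := by
  have hshift := B.shift_mem _ (-1) hw
  have ht := B.smul_mem c _ hshift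
  have h' : ∀ n, ‖x n‖ ≤ (c • fun n => ‖w (n + -1)‖) n := by simpa [← sub_eq_add_neg] using h
  refine ⟨memXB_of_norm_le _ ht h', (NXB_le_of_norm_le _ ht h').trans_eq ?_⟩
  rw [B.N_smul _ _ hshift, B.shift_isometry _ _ hw, abs_of_nonneg hc, NXB]

end SequenceSpace

@[ext]
structure XB (B : BanachSeqSpace) (E : Type*) [NormedAddCommGroup E] where
  seq : ℤ → E
  mem : memXB B seq

namespace XB

variable {E : Type*} [NormedAddCommGroup E] {B : BanachSeqSpace}

instance : Zero (XB B E) := ⟨⟨0, memXB_zero B⟩⟩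

instance : MetricSpace (XB B E) where
  dist x y := NXB B (x.seq - y.seq)
  dist_self x := by simp [NXB_zero]
  dist_comm x y := NXB_sub_comm B _ _
  dist_triangle x y z := by
    simpa using NXB_add_le B (memXB_sub B x.mem y.mem) (memXB_sub B y.mem z.mem)
  eq_of_dist_eq_zero {x y} h := XB.ext (eq_of_NXB_sub_eq_zero B x.mem y.mem h)

lemma dist_eq (x y : XB B E) : dist x y = NXB B (x.seq - y.seq) := by rfl

lemma dist_zero_left (x : XB B E) : dist 0 x = NXB B x.seq := by
  rw [dist_eq, NXB_sub_comm]
  exact congrArg _ (sub_zero _)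

variable (B : AdmissibleBSS)

lemma dist_apply_le (x y : XB B.toBanachSeqSpace E) (n : ℤ) :
    dist (x.seq n) (y.seq n) ≤ (B.N fun k => if k = n then (1 : ℝ) else 0)⁻¹ * dist x y := by
  rw [dist_eq_norm, dist_eq, ← div_eq_inv_mul, le_div_iff₀ (B.indicator_pos n), mul_comm]
  simpa [NXB] using B.N_indicator_mul_abs_le (memXB_sub _ x.mem y.mem) n

lemma uniformContinuous_seq_apply (n : ℤ) :
    UniformContinuous fun x : XB B.toBanachSeqSpace E => x.seq n :=
  (LipschitzWith.of_dist_le_mul (K := ⟨_, inv_nonneg.2 (B.N_nonneg _)⟩)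
    fun x y => dist_apply_le B x y n).uniformContinuous

/-- A Fatou property of `X_B`, obtained from the completeness of `B`. -/
lemma memXB_sub_and_tendsto_dist {u : ℕ → XB B.toBanachSeqSpace E} (hu : CauchySeq u)
    {v : ℤ → E} (hv : ∀ n, Tendsto (fun j => (u j).seq n) atTop (𝓝 (v n))) (k : ℕ) :
    memXB B.toBanachSeqSpace ((u k).seq - v) ∧
      Tendsto (fun j => dist (u k) (u j)) atTop (𝓝 (NXB B.toBanachSeqSpace ((u k).seq - v))) := by
  simp only [memXB, NXB, dist_eq, Pi.sub_apply]
  refine B.mem_and_tendsto_N_of_cauchy (fun j => memXB_sub _ (u k).mem (u j).mem)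
    (fun ε hε => ?_) fun n => ((tendsto_const_nhds.sub (hv n)).norm)
  obtain ⟨K, hK⟩ := Metric.cauchySeq_iff.1 hu ε hε
  refine ⟨K, fun j hj j' hj' => ?_⟩
  refine (B.solid _ _ (memXB_sub _ (u j').mem (u j).mem) fun n => ?_).2.trans (hK j' hj' j hj).le
  simpa [abs_norm] using
    abs_norm_sub_norm_le ((u k).seq n - (u j).seq n) ((u k).seq n - (u j').seq n)

instance [CompleteSpace E] : CompleteSpace (XB B.toBanachSeqSpace E) := by
  refine Metric.complete_of_cauchySeq_tendsto fun u hu => ?_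
  have hpt : ∀ n, ∃ l, Tendsto (fun j => (u j).seq n) atTop (𝓝 l) := fun n =>
    cauchySeq_tendsto_of_complete ((uniformContinuous_seq_apply B n).comp_cauchySeq hu)
  choose v hv using hpt
  have hlim := memXB_sub_and_tendsto_dist B hu hv
  have hvmem : memXB B.toBanachSeqSpace v := by
    simpa using memXB_sub _ (u 0).mem (hlim 0).1
  refine ⟨⟨v, hvmem⟩, Metric.tendsto_atTop.2 fun ε hε => ?_⟩
  obtain ⟨K, hK⟩ := Metric.cauchySeq_iff.1 hu (ε / 2) (half_pos hε)
  refine ⟨K, fun k hk => ?_⟩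
  have hle : NXB B.toBanachSeqSpace ((u k).seq - v) ≤ ε / 2 :=
    le_of_tendsto (hlim k).2 (eventually_atTop.2 ⟨K, fun j hj => (hK k hk j hj).le⟩)
  rw [dist_eq]
  linarith

end XB

namespace PartialDichotomy

variable {A : ℤ → X →L[ℝ] X} (pd : PartialDichotomy A)

lemma norm_P1_le (n : ℤ) : ‖pd.P1 n‖ ≤ pd.D := by
  simpa [fcoc] using pd.bound1 n 0

lemma norm_P2_le (n : ℤ) : ‖pd.P2 n‖ ≤ pd.D := by
  simpa [pd.V_self] using pd.bound2 n n le_rfl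

lemma P1_add_P2 {n : ℤ} (h : pd.P3 n = 0) : pd.P1 n + pd.P2 n = ContinuousLinearMap.id ℝ X :=
  ContinuousLinearMap.ext fun x => by simpa [h] using pd.sum_eq n x

lemma one_le_two_mul_D [Nontrivial X] {n : ℤ} (h : pd.P3 n = 0) : 1 ≤ 2 * pd.D :=
  calc 1 = ‖pd.P1 n + pd.P2 n‖ := by rw [pd.P1_add_P2 h, ContinuousLinearMap.norm_id]
    _ ≤ ‖pd.P1 n‖ + ‖pd.P2 n‖ := norm_add_le _ _
    _ ≤ 2 * pd.D := by linarith [pd.norm_P1_le n, pd.norm_P2_le n]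

variable {B : BanachSeqSpace} {x : ℤ → X}

lemma memXBsu_iff (hP3 : ∀ n, pd.P3 n = 0) : memXBsu B pd x ↔ memXB B x :=
  ⟨And.left, fun hx => ⟨hx, fun n => by simpa [hP3] using (pd.sum_eq n (x n)).symm⟩⟩

lemma centr_eq_zero (hP3 : ∀ n, pd.P3 n = 0) : centr pd x = 0 := by
  funext n
  simp [centr, hP3]

lemma stun_eq_self (hP3 : ∀ n, pd.P3 n = 0) : stun pd x = x := by
  funext n
  simp [stun, hP3]

lemma Nadapt_eq_NXB (hP3 : ∀ n, pd.P3 n = 0) : Nadapt B pd x = NXB B x := by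
  rw [Nadapt, pd.centr_eq_zero hP3, pd.stun_eq_self hP3, NXB_zero]
  exact max_eq_right (B.N_nonneg _)

end PartialDichotomy

structure IsGreenOperator (B : BanachSeqSpace) (A : ℤ → X →L[ℝ] X) (𝔸 : (ℤ → X) → (ℤ → X))
    (K : ℝ) : Prop where
  mem : ∀ z, memXB B z → memXB B (𝔸 z)
  eq_iff : ∀ x z, memXB B x → memXB B z → (𝔸 z = x ↔ ∀ n, x n - A (n - 1) (x (n - 1)) = z n)
  NXB_le : ∀ z, memXB B z → NXB B (𝔸 z) ≤ K * NXB B z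

namespace IsGreenOperator

variable {B : BanachSeqSpace} {A : ℤ → X →L[ℝ] X} {𝔸 : (ℤ → X) → (ℤ → X)} {K : ℝ}

lemma apply_sub (h𝔸 : IsGreenOperator B A 𝔸 K) {z z' : ℤ → X} (hz : memXB B z)
    (hz' : memXB B z') : 𝔸 (z - z') = 𝔸 z - 𝔸 z' := by
  have hrec := (h𝔸.eq_iff _ z (h𝔸.mem z hz) hz).1 rfl
  have hrec' := (h𝔸.eq_iff _ z' (h𝔸.mem z' hz') hz').1 rfl
  refine (h𝔸.eq_iff _ _ (memXB_sub B (h𝔸.mem z hz) (h𝔸.mem z' hz')) (memXB_sub B hz hz')).2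
    fun n => ?_
  simp only [Pi.sub_apply, map_sub, ← hrec n, ← hrec' n]
  abel

theorem exists_unique_shadowing [CompleteSpace X] {B : AdmissibleBSS}
    (h𝔸 : IsGreenOperator B.toBanachSeqSpace A 𝔸 K) (hK : 0 ≤ K) {c : ℝ} (hc : 0 ≤ c)
    (hcK : c * K < 1) {f : ℤ → X → X} (hf : ∀ (n : ℤ) (x x' : X), ‖f n x - f n x'‖ ≤ c * ‖x - x'‖)
    {F : ℤ → X → X} (hF : ∀ (n : ℤ) (x : X), F n x = A n x + f n x) {y : ℤ → X}
    (hy : memXB B.toBanachSeqSpace fun n => y (n + 1) - F n (y n)) :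
    ∃ x : ℤ → X, (memXB B.toBanachSeqSpace (x - y) ∧
        NXB B.toBanachSeqSpace (x - y) ≤
          K * NXB B.toBanachSeqSpace (fun n => y (n + 1) - F n (y n)) / (1 - c * K) ∧
        ∀ n, x (n + 1) = F n (x n)) ∧
      ∀ x', memXB B.toBanachSeqSpace (x' - y) → (∀ n, x' (n + 1) = F n (x' n)) → x' = x := by
  set 𝔅 := B.toBanachSeqSpace
  -- `x = y + w` solves the equation iff `w n - A (n - 1) (w (n - 1)) = g w n`
  set g : (ℤ → X) → ℤ → X := fun w n =>
    F (n - 1) (y (n - 1) + w (n - 1)) - y n - A (n - 1) (w (n - 1))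
  have hg_sub : ∀ {w w'}, memXB 𝔅 w → memXB 𝔅 w' →
      memXB 𝔅 (g w - g w') ∧ NXB 𝔅 (g w - g w') ≤ c * NXB 𝔅 (w - w') := fun {w w'} hw hw' =>
    memXB_and_NXB_le_of_norm_le_shift B (memXB_sub 𝔅 hw hw') hc fun n => by
      have hgg : (g w - g w') n =
          f (n - 1) (y (n - 1) + w (n - 1)) - f (n - 1) (y (n - 1) + w' (n - 1)) := by
        simp only [g, Pi.sub_apply, hF, map_add]
        abel
      simpa [hgg, add_sub_add_left_eq_sub] using
        hf (n - 1) (y (n - 1) + w (n - 1)) (y (n - 1) + w' (n - 1))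
  have hg_zero : memXB 𝔅 (g 0) ∧ NXB 𝔅 (g 0) ≤ 1 * NXB 𝔅 fun n => y (n + 1) - F n (y n) :=
    memXB_and_NXB_le_of_norm_le_shift B hy zero_le_one fun n => by
      simp [g, norm_sub_rev]
  have hg_mem : ∀ {w}, memXB 𝔅 w → memXB 𝔅 (g w) := fun hw => by
    simpa using memXB_sub 𝔅 (hg_sub hw (memXB_zero 𝔅)).1 (memXB_sub 𝔅 (memXB_zero 𝔅) hg_zero.1)
  let Φ : XB 𝔅 X → XB 𝔅 X := fun w => ⟨𝔸 (g w.seq), h𝔸.mem _ (hg_mem w.mem)⟩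
  have hΦ : ContractingWith ⟨c * K, mul_nonneg hc hK⟩ Φ := by
    refine ⟨by exact_mod_cast hcK, LipschitzWith.of_dist_le_mul fun w w' => ?_⟩
    have hgw := hg_sub w.mem w'.mem
    calc dist (Φ w) (Φ w') = NXB 𝔅 (𝔸 (g w.seq - g w'.seq)) := by
          rw [XB.dist_eq, h𝔸.apply_sub (hg_mem w.mem) (hg_mem w'.mem)]
      _ ≤ K * (c * NXB 𝔅 (w.seq - w'.seq)) :=
          (h𝔸.NXB_le _ hgw.1).trans (mul_le_mul_of_nonneg_left hgw.2 hK)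
      _ = c * K * dist w w' := by rw [XB.dist_eq]; ring
  have hfixed : ∀ w : XB 𝔅 X, Φ w = w ↔ ∀ n, (y + w.seq) (n + 1) = F n ((y + w.seq) n) := by
    intro w
    rw [XB.ext_iff, h𝔸.eq_iff _ _ w.mem (hg_mem w.mem)]
    simp only [g, sub_left_inj]
    simp only [Pi.add_apply, eq_sub_iff_add_eq]
    exact ⟨fun h n => by simpa [add_comm] using h (n + 1),
      fun h n => by simpa [add_comm] using h (n - 1)⟩
  have hv := hΦ.fixedPoint_isFixedPt
  have hv_dist := hΦ.dist_fixedPoint_le 0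
  have hv_unique : ∀ w, Φ w = w → w = ContractingWith.fixedPoint Φ hΦ := fun _ =>
    hΦ.fixedPoint_unique
  generalize ContractingWith.fixedPoint Φ hΦ = v at hv hv_dist hv_unique
  refine ⟨y + v.seq, ⟨by simpa using v.mem, ?_, (hfixed v).1 hv⟩,
    fun x' hx' hsol => ?_⟩
  · rw [add_sub_cancel_left, ← XB.dist_zero_left]
    refine hv_dist.trans (div_le_div_of_nonneg_right ?_ (sub_nonneg.2 hcK.le))
    rw [XB.dist_zero_left]
    calc NXB 𝔅 (𝔸 (g 0)) ≤ K * NXB 𝔅 (g 0) := h𝔸.NXB_le _ hg_zero.1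
      _ ≤ K * NXB 𝔅 fun n => y (n + 1) - F n (y n) := by
          gcongr
          simpa using hg_zero.2
  · have hw : Φ ⟨x' - y, hx'⟩ = ⟨x' - y, hx'⟩ := (hfixed _).2 (by simpa using hsol)
    rw [← hv_unique _ hw]
    simp

end IsGreenOperator

theorem shadowing_exponential_dichotomy
    (X : Type*) [NormedAddCommGroup X] [NormedSpace ℝ X] [CompleteSpace X]
    (B : AdmissibleBSS) (A : ℤ → X →L[ℝ] X) (pd : PartialDichotomy A)
    -- exponential dichotomy: the central projections vanish
    (hP3 : ∀ n : ℤ, pd.P3 n = 0)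
    (c : ℝ) (hc : 0 ≤ c)
    (f : ℤ → X → X) (hf : ∀ (n : ℤ) (x y : X), ‖f n x - f n y‖ ≤ c * ‖x - y‖)
    (F : ℤ → X → X) (hF : ∀ (n : ℤ) (x : X), F n x = A n x + f n x)
    (𝔸 : (ℤ → X) → (ℤ → X))
    (h𝔸map : ∀ y, memXBsu B.toBanachSeqSpace pd y → memXBsu B.toBanachSeqSpace pd (𝔸 y))
    (h𝔸char : ∀ x y, memXBsu B.toBanachSeqSpace pd x → memXBsu B.toBanachSeqSpace pd y →
      (𝔸 y = x ↔ ∀ n : ℤ, x n - A (n - 1) (x (n - 1)) = y n))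
    (G : (ℤ → X) → (ℤ → X))
    (hG : ∀ x : ℤ → X, G x = -centr pd x + 𝔸 (stun pd x))
    (normG : ℝ) (hnormG0 : 0 < normG)
    (hnormG : ∀ x, memXB B.toBanachSeqSpace x →
      Nadapt B.toBanachSeqSpace pd (G x) ≤ normG * Nadapt B.toBanachSeqSpace pd x)
    (hsmall : 4 * c * pd.D * normG < 1) :
    ∃ L > (0 : ℝ), ∀ ε > (0 : ℝ), ∀ y : ℤ → X,
      memXB B.toBanachSeqSpace (fun n => y (n + 1) - F n (y n)) →
      NXB B.toBanachSeqSpace (fun n => y (n + 1) - F n (y n)) ≤ L * ε →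
      ∃! x : ℤ → X,
        memXB B.toBanachSeqSpace (x - y) ∧
        NXB B.toBanachSeqSpace (x - y) ≤ ε ∧
        ∀ n : ℤ, x (n + 1) = F n (x n) := by
  have hsu : ∀ z, memXBsu B.toBanachSeqSpace pd z ↔ memXB B.toBanachSeqSpace z :=
    fun _ => pd.memXBsu_iff hP3
  have h𝔸 : IsGreenOperator B.toBanachSeqSpace A 𝔸 normG :=
    { mem := fun z hz => (h𝔸map z ((hsu z).2 hz)).1
      eq_iff := fun x z hx hz => h𝔸char x z ((hsu x).2 hx) ((hsu z).2 hz)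
      NXB_le := fun z hz => by
        simpa [hG, pd.centr_eq_zero hP3, pd.stun_eq_self hP3, pd.Nadapt_eq_NXB hP3] using
          hnormG z hz }
  rcases subsingleton_or_nontrivial X with hX | hX
  · refine ⟨1, one_pos, fun ε hε y _ _ => ⟨y, ⟨?_, ?_, fun _ => Subsingleton.elim _ _⟩,
      fun _ _ => Subsingleton.elim _ _⟩⟩
    · simpa using memXB_zero B.toBanachSeqSpace
    · simpa [NXB_zero] using hε.le
  have hq : c * normG < 1 := by nlinarith [pd.one_le_two_mul_D (hP3 0), mul_nonneg hc hnormG0.le]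
  refine ⟨(1 - c * normG) / normG, div_pos (by linarith) hnormG0, fun ε hε y hy hyε => ?_⟩
  obtain ⟨x, ⟨hx, hxy, hsol⟩, huniq⟩ := h𝔸.exists_unique_shadowing hnormG0.le hc hq hf hF hy
  refine ⟨x, ⟨hx, hxy.trans ?_, hsol⟩, fun x' hx' => huniq x' hx'.1 hx'.2.2⟩
  rw [div_le_iff₀ (by linarith)]
  calc normG * NXB B.toBanachSeqSpace (fun n => y (n + 1) - F n (y n))
      ≤ normG * ((1 - c * normG) / normG * ε) := by gcongr
    _ = ε * (1 - c * normG) := by field_simp
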